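/- If G is a finite simple graph of order n with independence number α(G), then th_⌊Z⌋(G) ≤ n − α(G) + ⌈2√(α(G)) − 1⌉. -/

import Mathlib

open SimpleGraph

namespace ZFT

variable {V : Type*} {α : Type*} {β : Type*}

/-! ### Standard zero forcing (simultaneous propagation) -/

/-- One round of simultaneous standard zero forcing: a blue vertex forces its
unique white neighbor. -/
def zStep (G : SimpleGraph V) (S : Set V) : Set V :=
  S ∪ {w | ∃ u ∈ S, G.Adj u w ∧ ∀ x, G.Adj u x → x ∉ S → x = w}

/-- `B` is a standard zero forcing set of `G`. -/
def IsZeroForcingSet (G : SimpleGraph V) (B : Set V) : Prop :=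
  ∃ t : ℕ, (zStep G)^[t] B = Set.univ

/-- The standard propagation time `pt_Z(G;B)` (`⊤` if `B` is not a zero forcing set). -/
noncomputable def ptZ (G : SimpleGraph V) (B : Set V) : ℕ∞ :=
  sInf {n : ℕ∞ | ∃ t : ℕ, n = t ∧ (zStep G)^[t] B = Set.univ}

/-- The standard throttling number `th_Z(G;B) = |B| + pt_Z(G;B)`. -/
noncomputable def thZ (G : SimpleGraph V) (B : Set V) : ℕ∞ :=
  (B.ncard : ℕ∞) + ptZ G B

/-- The standard throttling number `th_Z(G)`. -/
noncomputable def thZgraph (G : SimpleGraph V) : ℕ∞ :=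
  sInf {n : ℕ∞ | ∃ B : Set V, IsZeroForcingSet G B ∧ n = thZ G B}

/-- The standard zero forcing number `Z(G)`. -/
noncomputable def Znum (G : SimpleGraph V) : ℕ :=
  sInf {k : ℕ | ∃ B : Set V, IsZeroForcingSet G B ∧ B.ncard = k}

/-- The standard propagation time `pt_Z(G)`, minimized over minimum zero forcing sets. -/
noncomputable def ptZgraph (G : SimpleGraph V) : ℕ∞ :=
  sInf {n : ℕ∞ | ∃ B : Set V, IsZeroForcingSet G B ∧ B.ncard = Znum G ∧ n = ptZ G B}

/-! ### Sets of standard forces -/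

/-- Validity of a single standard force `u → w` when `blue` is the blue set. -/
def zForceValid (G : SimpleGraph V) (blue : Set V) (u w : V) : Prop :=
  u ∈ blue ∧ w ∉ blue ∧ G.Adj u w ∧ ∀ x, G.Adj u x → x ∉ blue → x = w

/-- Validity of a chronological list of standard forces starting from a blue set. -/
def zValidList (G : SimpleGraph V) : Set V → List (V × V) → Prop
  | _, [] => True
  | blue, p :: L => zForceValid G blue p.1 p.2 ∧ zValidList G (insert p.2 blue) L

/-- The blue set after performing all forces in a list, starting from `B`. -/
def endBlue (B : Set V) (L : List (V × V)) : Set V :=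
  B ∪ {w | ∃ u, (u, w) ∈ L}

/-- The set of vertices that have performed a force in a list. -/
def endForced (L : List (V × V)) : Set V := {u | ∃ w, (u, w) ∈ L}

/-- `F` is a set of standard forces of `B` in `G` (recorded from a maximal
chronological list of forces). -/
def IsZForceSet (G : SimpleGraph V) (B : Set V) (F : Set (V × V)) : Prop :=
  ∃ L : List (V × V), zValidList G B L ∧
    (∀ u w, ¬ zForceValid G (endBlue B L) u w) ∧ F = {p | p ∈ L}

/-- The set of blue vertices at time `t` when the forces of `F` are performed at the
earliest possible time steps, starting from `B` blue. -/
def zBlueAt (G : SimpleGraph V) (F : Set (V × V)) (B : Set V) : ℕ → Set V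
  | 0 => B
  | t + 1 =>
      zBlueAt G F B t ∪ {w | ∃ v, (v, w) ∈ F ∧ zForceValid G (zBlueAt G F B t) v w}

/-- The standard propagation time `pt_Z(G;F)` of a set of forces `F` of `B`. -/
noncomputable def ptZofF (G : SimpleGraph V) (F : Set (V × V)) (B : Set V) : ℕ∞ :=
  sInf {n : ℕ∞ | ∃ t : ℕ, n = t ∧ zBlueAt G F B t = Set.univ}

/-! ### `⌊Z⌋` (minor monotone floor) forcing -/

/-- Validity of a single `⌊Z⌋` force `u → w`: `u` is blue and has not yet forced, `w`
is white, and either `w` is the unique white neighbor of `u`, or all neighbors of `u`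
are blue (a hop). -/
def zfForceValid (G : SimpleGraph V) (blue forced : Set V) (u w : V) : Prop :=
  u ∈ blue ∧ w ∉ blue ∧ u ∉ forced ∧
    ((G.Adj u w ∧ ∀ x, G.Adj u x → x ∉ blue → x = w) ∨ ∀ x, G.Adj u x → x ∈ blue)

/-- Validity of a chronological list of `⌊Z⌋` forces. -/
def zfValidList (G : SimpleGraph V) : Set V → Set V → List (V × V) → Prop
  | _, _, [] => True
  | blue, forced, p :: L =>
      zfForceValid G blue forced p.1 p.2 ∧
        zfValidList G (insert p.2 blue) (insert p.1 forced) L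

/-- `F` is a set of `⌊Z⌋` forces of `B` in `G` (recorded from a maximal chronological
list of `⌊Z⌋` forces starting with `B` blue). -/
def IsZFForceSet (G : SimpleGraph V) (B : Set V) (F : Set (V × V)) : Prop :=
  ∃ L : List (V × V), zfValidList G B ∅ L ∧
    (∀ u w, ¬ zfForceValid G (endBlue B L) (endForced L) u w) ∧ F = {p | p ∈ L}

/-- The set of blue vertices at time `t` when the `⌊Z⌋` forces of `F` are performed at
the earliest possible time steps, starting from `B` blue. -/
def zfBlueAt (G : SimpleGraph V) (F : Set (V × V)) (B : Set V) : ℕ → Set V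
  | 0 => B
  | t + 1 =>
      zfBlueAt G F B t ∪
        {w | ∃ v, (v, w) ∈ F ∧ v ∈ zfBlueAt G F B t ∧ w ∉ zfBlueAt G F B t ∧
          (∀ w', (v, w') ∈ F → w' ∈ zfBlueAt G F B t → w' ∈ B) ∧
          ((G.Adj v w ∧ ∀ x, G.Adj v x → x ∉ zfBlueAt G F B t → x = w) ∨
            ∀ x, G.Adj v x → x ∈ zfBlueAt G F B t)}

/-- The `⌊Z⌋` propagation time `pt_⌊Z⌋(G;F)` of a set of `⌊Z⌋` forces `F` of `B`. -/
noncomputable def ptZFofF (G : SimpleGraph V) (F : Set (V × V)) (B : Set V) : ℕ∞ :=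
  sInf {n : ℕ∞ | ∃ t : ℕ, n = t ∧ zfBlueAt G F B t = Set.univ}

/-- The `⌊Z⌋` propagation time `pt_⌊Z⌋(G;B)`, minimized over sets of `⌊Z⌋` forces of `B`. -/
noncomputable def ptZF (G : SimpleGraph V) (B : Set V) : ℕ∞ :=
  sInf {n : ℕ∞ | ∃ F : Set (V × V), IsZFForceSet G B F ∧ n = ptZFofF G F B}

/-- The `⌊Z⌋` throttling number `th_⌊Z⌋(G;B) = |B| + pt_⌊Z⌋(G;B)`. -/
noncomputable def thZF (G : SimpleGraph V) (B : Set V) : ℕ∞ :=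
  (B.ncard : ℕ∞) + ptZF G B

/-- The `⌊Z⌋` throttling number `th_⌊Z⌋(G)`, minimized over all `B ⊆ V(G)`. -/
noncomputable def thZFgraph (G : SimpleGraph V) : ℕ∞ :=
  sInf {n : ℕ∞ | ∃ B : Set V, n = thZF G B}

/-- `B` is a `⌊Z⌋` forcing set of `G`. -/
def IsZFForcingSet (G : SimpleGraph V) (B : Set V) : Prop :=
  ∃ F : Set (V × V), IsZFForceSet G B F ∧ B ∪ {w | ∃ u, (u, w) ∈ F} = Set.univ

/-- The `⌊Z⌋` forcing number `⌊Z⌋(G)`. -/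
noncomputable def ZFnum (G : SimpleGraph V) : ℕ :=
  sInf {k : ℕ | ∃ B : Set V, IsZFForcingSet G B ∧ B.ncard = k}

/-- The `⌊Z⌋` propagation time `pt_⌊Z⌋(G)`, minimized over minimum `⌊Z⌋` forcing sets. -/
noncomputable def ptZFgraph (G : SimpleGraph V) : ℕ∞ :=
  sInf {n : ℕ∞ | ∃ B : Set V, IsZFForcingSet G B ∧ B.ncard = ZFnum G ∧ n = ptZF G B}

/-! ### Contractions, minors, and products -/

/-- The graph obtained from `H` by contracting (all) the edges in `C`: its vertices are
the connected components of the spanning subgraph of `H` with edge set `C ∩ E(H)`, and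
two distinct components are adjacent iff `H` has an edge between them. -/
def contractEdges (H : SimpleGraph α) (C : Set (Sym2 α)) :
    SimpleGraph (SimpleGraph.fromEdgeSet C ⊓ H).ConnectedComponent where
  Adj c d := c ≠ d ∧ ∃ a b, H.Adj a b ∧
      (SimpleGraph.fromEdgeSet C ⊓ H).connectedComponentMk a = c ∧
      (SimpleGraph.fromEdgeSet C ⊓ H).connectedComponentMk b = d
  symm := ⟨by
    rintro c d ⟨hcd, a, b, hab, ha, hb⟩
    exact ⟨hcd.symm, b, a, hab.symm, hb, ha⟩⟩
  loopless := ⟨fun c h => h.1 rfl⟩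

/-- `G` is a minor of `H`: `G` is isomorphic to a subgraph of a graph obtained from an
induced subgraph of `H` by contracting a set of edges. -/
def IsMinor (G : SimpleGraph β) (H : SimpleGraph α) : Prop :=
  ∃ (s : Set α) (C : Set (Sym2 s))
    (G'' : SimpleGraph (SimpleGraph.fromEdgeSet C ⊓ H.induce s).ConnectedComponent),
      G'' ≤ contractEdges (H.induce s) C ∧ Nonempty (G ≃g G'')

/-- The Cartesian product `K_a □ P_{b+1}`. -/
def prodKP (a b : ℕ) : SimpleGraph (Fin a × Fin (b + 1)) :=
  (⊤ : SimpleGraph (Fin a)) □ SimpleGraph.pathGraph (b + 1)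

/-- The path edges of `K_a □ P_{b+1}` (edges within the copies of `P_{b+1}`). -/
def pathEdges (a b : ℕ) : Set (Sym2 (Fin a × Fin (b + 1))) :=
  {e | ∃ (i : Fin a) (j j' : Fin (b + 1)),
    (SimpleGraph.pathGraph (b + 1)).Adj j j' ∧ e = s((i, j), (i, j'))}

/-- The complete edges of `K_a □ P_{b+1}` (edges within the copies of `K_a`). -/
def completeEdges (a b : ℕ) : Set (Sym2 (Fin a × Fin (b + 1))) :=
  {e | ∃ (i i' : Fin a) (j : Fin (b + 1)), i ≠ i' ∧ e = s((i, j), (i', j))}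

/-- The star `K_{1,n-1}` on `n` vertices: vertex `0` is adjacent to all others. -/
def starGraph (n : ℕ) : SimpleGraph (Fin n) where
  Adj i j := i ≠ j ∧ ((i : ℕ) = 0 ∨ (j : ℕ) = 0)
  symm := ⟨by rintro i j ⟨h1, h2⟩; exact ⟨h1.symm, h2.symm⟩⟩
  loopless := ⟨fun i h => h.1 rfl⟩

/-- The independence number `α(G)`. -/
noncomputable def indepNum (G : SimpleGraph V) : ℕ :=
  sSup {k : ℕ | ∃ s : Set V, (∀ a ∈ s, ∀ b ∈ s, a ≠ b → ¬ G.Adj a b) ∧ s.ncard = k}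

/-!
Let `S = {s₀, …, s_{α-1}}` be a maximum independent set and `1 ≤ k ≤ α`. Start with everything
outside `S` blue, together with `s₀, …, s_{k-1}`. A vertex of `S` has all its neighbours outside
`S`, so as soon as it is blue it may hop; letting `sᵢ` force `s_{i+k}` turns the next `k`
vertices of `S` blue in every round, and everything is blue after `T` rounds once `α ≤ k (T + 1)`.
Hence `th_⌊Z⌋(G) ≤ n - α + k + T`, and `k = ⌊√(α - 1)⌋ + 1`, `T = ⌊(α - 1) / k⌋` give
`(k + T)² < 4α`, i.e. `k + T ≤ ⌈2√α - 1⌉`.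
-/

open Set

section Throttling

variable {G : SimpleGraph V}

lemma zfBlueAt_subset_endBlue (B : Set V) (L : List (V × V)) (t : ℕ) :
    zfBlueAt G {p | p ∈ L} B t ⊆ endBlue B L := by
  induction t with
  | zero => exact subset_union_left
  | succ t ih =>
    rintro w (hw | ⟨v, hvw, -⟩)
    · exact ih hw
    · exact Or.inr ⟨v, hvw⟩

lemma thZFgraph_le_of_zfValidList {B : Set V} {L : List (V × V)} (hL : zfValidList G B ∅ L)
    {t : ℕ} (ht : zfBlueAt G {p | p ∈ L} B t = univ) :
    thZFgraph G ≤ B.ncard + t := by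
  have hend : endBlue B L = univ := eq_univ_of_univ_subset (ht ▸ zfBlueAt_subset_endBlue B L t)
  have hF : IsZFForceSet G B {p | p ∈ L} :=
    ⟨L, hL, fun u w h => h.2.1 (hend ▸ mem_univ w), rfl⟩
  have hpt : ptZF G B ≤ t :=
    calc ptZF G B ≤ ptZFofF G {p | p ∈ L} B := sInf_le ⟨_, hF, rfl⟩
      _ ≤ t := sInf_le ⟨t, rfl, ht⟩
  calc thZFgraph G ≤ thZF G B := sInf_le ⟨B, rfl⟩
    _ ≤ B.ncard + t := add_le_add_right hpt _

lemma thZFgraph_le_card [Fintype V] (G : SimpleGraph V) : thZFgraph G ≤ Fintype.card V := by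
  simpa using thZFgraph_le_of_zfValidList (G := G) (B := univ) (L := []) trivial (t := 0) rfl

end Throttling

section Hopping

variable {G : SimpleGraph V} {s : ℕ → V} {A k : ℕ}

def hopForces (s : ℕ → V) (A k : ℕ) : List (V × V) :=
  (List.range (A - k)).map fun i => (s i, s (i + k))

lemma mem_hopForces {p : V × V} : p ∈ hopForces s A k ↔ ∃ i < A - k, (s i, s (i + k)) = p := by
  simp [hopForces]

lemma mem_image_Ico_iff (hs : InjOn s (Iio A)) {i c : ℕ} (hi : i < A) :
    s i ∈ s '' Ico c A ↔ c ≤ i := by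
  rw [hs.mem_image_iff (fun j hj => hj.2) hi]
  simp [hi]

lemma insert_compl_image_Ico (hs : InjOn s (Iio A)) {c : ℕ} (hc : c < A) :
    insert (s c) (s '' Ico c A)ᶜ = (s '' Ico (c + 1) A)ᶜ := by
  ext x
  by_cases hx : x = s c
  · subst hx
    simp [mem_image_Ico_iff hs hc]
  · simp [← insert_Ico_add_one_left_eq_Ico hc, image_insert_eq, hx]

lemma adj_mem_compl_image_Ico (hind : G.IsIndepSet (s '' Iio A)) {i : ℕ} (hi : i < A) (c : ℕ)
    {x : V} (hx : G.Adj (s i) x) : x ∈ (s '' Ico c A)ᶜ := by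
  rintro ⟨j, hj, rfl⟩
  exact hind (mem_image_of_mem s hi) (mem_image_of_mem s hj.2) hx.ne hx

lemma zfValidList_map_range' (hs : InjOn s (Iio A)) (hind : G.IsIndepSet (s '' Iio A))
    (hk : 0 < k) (n a : ℕ) (hn : a + n ≤ A - k) :
    zfValidList G (s '' Ico (a + k) A)ᶜ (s '' Iio a)
      ((List.range' a n).map fun i => (s i, s (i + k))) := by
  induction n generalizing a with
  | zero => trivial
  | succ n ih =>
    have haA : a < A := by omega
    have hakA : a + k < A := by omega
    refine ⟨⟨?_, ?_, ?_, Or.inr fun x hx => adj_mem_compl_image_Ico hind haA _ hx⟩, ?_⟩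
    · simpa [mem_image_Ico_iff hs haA] using hk.ne'
    · simp [mem_image_Ico_iff hs hakA]
    · dsimp only
      rw [hs.mem_image_iff (Iio_subset_Iio haA.le) haA]
      exact lt_irrefl a
    · dsimp only
      rw [insert_compl_image_Ico hs hakA, ← image_insert_eq, Iio_insert,
        ← Iio_add_one_eq_Iic]
      simpa [Nat.add_right_comm a 1 k] using ih (a + 1) (by omega)

lemma zfValidList_hopForces (hs : InjOn s (Iio A)) (hind : G.IsIndepSet (s '' Iio A))
    (hk : 0 < k) : zfValidList G (s '' Ico k A)ᶜ ∅ (hopForces s A k) := by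
  simpa [hopForces, List.range_eq_range'] using
    zfValidList_map_range' hs hind hk (A - k) 0 (by omega)

lemma zfBlueAt_hopForces (hs : InjOn s (Iio A)) (hind : G.IsIndepSet (s '' Iio A))
    (hk : 0 < k) (t : ℕ) :
    zfBlueAt G {p | p ∈ hopForces s A k} (s '' Ico k A)ᶜ t = (s '' Ico (k * (t + 1)) A)ᶜ := by
  induction t with
  | zero => simp [zfBlueAt]
  | succ t ih =>
    have hkc : k ≤ k * (t + 1) := Nat.le_mul_of_pos_right k t.succ_pos
    rw [zfBlueAt, ih, show k * (t + 1 + 1) = k * (t + 1) + k by ring]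
    generalize k * (t + 1) = c at hkc ⊢
    apply Subset.antisymm
    · rintro x (hx | ⟨v, hvF, hv, -, -, -⟩)
      · exact compl_subset_compl.mpr (image_mono (Ico_subset_Ico_left (by omega))) hx
      · obtain ⟨i, hi, hvx⟩ := mem_hopForces.mp hvF
        obtain ⟨rfl, rfl⟩ := Prod.ext_iff.mp hvx
        rw [mem_compl_iff, mem_image_Ico_iff hs (by omega)] at hv ⊢
        omega
    · intro x hx
      by_cases hxc : x ∈ (s '' Ico c A)ᶜ
      · exact Or.inl hxc
      obtain ⟨j, ⟨hcj, hjA⟩, rfl⟩ := not_not.mp hxc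
      have hjc : j < c + k := by
        by_contra
        exact hx ⟨j, ⟨by omega, hjA⟩, rfl⟩
      have hjk : j - k + k = j := Nat.sub_add_cancel (by omega)
      refine Or.inr ⟨s (j - k), mem_hopForces.mpr ⟨j - k, by omega, by rw [hjk]⟩, ?_, hxc, ?_,
        Or.inr fun y hy => adj_mem_compl_image_Ico hind (by omega) c hy⟩
      · rw [mem_compl_iff, mem_image_Ico_iff hs (by omega)]
        omega
      · -- `s (j - k)` has not forced yet: its only target `s j` is still white
        intro w hw hwc
        obtain ⟨i, hi, hiw⟩ := mem_hopForces.mp hw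
        obtain ⟨hij, rfl⟩ := Prod.ext_iff.mp hiw
        obtain rfl : i = j - k := hs (mem_Iio.mpr (by omega)) (mem_Iio.mpr (by omega)) hij
        rw [hjk] at hwc
        exact absurd hwc hxc

lemma thZFgraph_le_of_hopForces [Fintype V] (hs : InjOn s (Iio A))
    (hind : G.IsIndepSet (s '' Iio A)) (hk : 0 < k) (hkA : k ≤ A) {T : ℕ}
    (hT : A ≤ k * (T + 1)) :
    thZFgraph G ≤ ((Fintype.card V - A + k : ℕ) : ℕ∞) + T := by
  have hblue := zfBlueAt_hopForces hs hind hk T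
  rw [Ico_eq_empty_of_le hT, image_empty, compl_empty] at hblue
  have hAV : A ≤ Fintype.card V := by
    simpa [hs.ncard_image] using ncard_le_card (s '' Iio A)
  have hcard : (s '' Ico k A)ᶜ.ncard = Fintype.card V - A + k := by
    have := ncard_add_ncard_compl (s '' Ico k A)
    rw [(hs.mono fun i hi => hi.2).ncard_image, ncard_Ico_nat,
      Nat.card_eq_fintype_card] at this
    omega
  simpa [hcard] using thZFgraph_le_of_zfValidList (zfValidList_hopForces hs hind hk) hblue

end Hopping

lemma thZFgraph_le_of_isIndepSet [Fintype V] {G : SimpleGraph V} {S : Set V}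
    (hS : G.IsIndepSet S) {k T : ℕ} (hk : 0 < k) (hkS : k ≤ S.ncard)
    (hT : S.ncard ≤ k * (T + 1)) :
    thZFgraph G ≤ ((Fintype.card V - S.ncard + k : ℕ) : ℕ∞) + T := by
  have : Nonempty V := (nonempty_of_ncard_ne_zero (by omega : S.ncard ≠ 0)).to_type
  obtain ⟨s, hs⟩ := (finite_Iio S.ncard).exists_bijOn_of_encard_eq (t := S)
    (by rw [← (finite_Iio _).cast_ncard_eq, ← S.toFinite.cast_ncard_eq, ncard_Iio_nat])
  rw [← hs.image_eq] at hS
  exact thZFgraph_le_of_hopForces hs.injOn hS hk hkS hT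

lemma exists_isIndepSet_ncard_eq_indepNum [Fintype V] (G : SimpleGraph V) :
    ∃ S : Set V, G.IsIndepSet S ∧ S.ncard = indepNum G := by
  obtain ⟨S, hS, hcard⟩ := Nat.sSup_mem (s := {k : ℕ | ∃ s : Set V,
      (∀ a ∈ s, ∀ b ∈ s, a ≠ b → ¬ G.Adj a b) ∧ s.ncard = k})
    ⟨0, ∅, by simp, ncard_empty V⟩ ⟨Fintype.card V, by
      rintro _ ⟨s, -, rfl⟩
      simpa using ncard_le_card s⟩
  exact ⟨S, fun a ha b hb hab => hS a ha b hb hab, hcard⟩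

lemma sqrt_add_one_add_div_sq_lt (a : ℕ) :
    (Nat.sqrt a + 1 + a / (Nat.sqrt a + 1)) ^ 2 < 4 * (a + 1) := by
  set m := Nat.sqrt a
  have hm : m * m ≤ a := Nat.sqrt_le a
  have hq : a / (m + 1) < m + 1 := (Nat.div_lt_iff_lt_mul m.succ_pos).mpr (Nat.lt_succ_sqrt a)
  rcases lt_or_ge a (m * (m + 1)) with ha | ha
  · have hq' : a / (m + 1) < m := (Nat.div_lt_iff_lt_mul m.succ_pos).mpr ha
    calc (m + 1 + a / (m + 1)) ^ 2 ≤ (2 * m) ^ 2 := Nat.pow_le_pow_left (by omega) 2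
      _ < 4 * (a + 1) := by nlinarith
  · calc (m + 1 + a / (m + 1)) ^ 2 ≤ (2 * m + 1) ^ 2 := Nat.pow_le_pow_left (by omega) 2
      _ < 4 * (a + 1) := by nlinarith

lemma le_toNat_ceil_two_sqrt_sub_one {x A : ℕ} (h : x ^ 2 < 4 * A) :
    x ≤ (⌈2 * Real.sqrt A - 1⌉).toNat := by
  have hx : (x : ℝ) / 2 < Real.sqrt A := by
    have : (x : ℝ) ^ 2 < 4 * A := by exact_mod_cast h
    exact (Real.lt_sqrt (by positivity)).mpr (by nlinarith)
  have : (x : ℤ) - 1 < ⌈2 * Real.sqrt A - 1⌉ := Int.lt_ceil.mpr (by push_cast; linarith)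
  omega

/-- `th_⌊Z⌋(G) ≤ n − α(G) + ⌈2√(α(G)) − 1⌉`. -/
theorem stmt17 {V : Type*} [Fintype V] (G : SimpleGraph V) :
    thZFgraph G ≤
      ((Fintype.card V - indepNum G : ℕ) : ℕ∞) +
        ((⌈2 * Real.sqrt (indepNum G) - 1⌉).toNat : ℕ∞) := by
  obtain ⟨S, hS, hSA⟩ := exists_isIndepSet_ncard_eq_indepNum G
  obtain hA | hA := Nat.eq_zero_or_pos (indepNum G)
  · simpa [hA, Int.ceil_neg] using thZFgraph_le_card G
  set a := indepNum G - 1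
  set k := Nat.sqrt a + 1
  have hk : 0 < k := Nat.succ_pos _
  have hAa : indepNum G = a + 1 := by omega
  have hkA : k ≤ a + 1 := Nat.succ_le_succ (Nat.sqrt_le_self a)
  have hT : a + 1 ≤ k * (a / k + 1) := Nat.lt_mul_div_succ a hk
  have hsum : k + a / k ≤ (⌈2 * Real.sqrt (indepNum G) - 1⌉).toNat :=
    le_toNat_ceil_two_sqrt_sub_one (hAa ▸ sqrt_add_one_add_div_sq_lt a)
  calc thZFgraph G ≤ ((Fintype.card V - indepNum G + k : ℕ) : ℕ∞) + (a / k : ℕ) :=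
        hSA ▸ thZFgraph_le_of_isIndepSet hS hk (by omega) (by omega)
    _ ≤ _ := by
        rw [← Nat.cast_add, ← Nat.cast_add]
        exact Nat.cast_le.mpr (by omega)

end ZFT
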